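/- If α = (α_1, ..., α_t, 0, 0, ...) with α_1 ≤ α_2 ≤ ... ≤ α_t, then the key polynomial κ_α equals the Schur polynomial s_{(α_t, ..., α_2, α_1)}(x_1, ..., x_t). -/

import Mathlib

/-!
Key polynomials are well defined: two derivations of `κ_β` ending with different adjacent
ascents of `β` are reconciled by the commutation and braid relations of the Demazure operators,
by induction on `∑ i, i * β i`. It follows that `κ_β` is symmetric in `x_k, x_{k+1}` whenever
`β k ≤ β (k+1)`, so for `α` as in the theorem `κ_α` is symmetric in `x_1, …, x_t` and
`a_δ κ_α = A(x^δ κ_α)`, where `A` antisymmetrizes over `S_t`. Since `x^δ (π_i g - g)` is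
`s_i`-symmetric, `A(x^δ π_i g) = A(x^δ g)`; peeling off the Demazure operators leaves
`A(x^δ x^λ) = a_{λ+δ}` with `λ` the decreasing rearrangement of `α`, which is the bialternant
formula for `s_λ`.
-/

open MvPolynomial Classical

/-- The divided difference operator ∂ on ℤ[x_1,...,x_n] for the pair of variables
x_i, x_j (intended: j = i+1): ∂(f) = (f - s_{ij}·f)/(x_i - x_j), defined via choice
from the (always valid) divisibility of f - s_{ij}·f by x_i - x_j. -/
noncomputable def ddiff (n : ℕ) (i j : Fin n) (f : MvPolynomial (Fin n) ℤ) :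
    MvPolynomial (Fin n) ℤ :=
  if h : (X i - X j : MvPolynomial (Fin n) ℤ) ∣ (f - rename (Equiv.swap i j) f) then
    h.choose
  else 0

/-- The Demazure operator π_i(f) = ∂_i(x_i · f). -/
noncomputable def demazure (n : ℕ) (i j : Fin n) (f : MvPolynomial (Fin n) ℤ) :
    MvPolynomial (Fin n) ℤ :=
  ddiff n i j (X i * f)

/-- `IsKey n α f` holds iff f is the key polynomial κ_α:
κ_α = x^α for weakly decreasing α, and κ_α = π_i(κ_{α̂}) when α_i < α_{i+1}, where α̂
exchanges the entries i, i+1 of α. -/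
inductive IsKey (n : ℕ) : (Fin n → ℕ) → MvPolynomial (Fin n) ℤ → Prop where
  | decreasing (α : Fin n → ℕ) (h : ∀ i j : Fin n, i ≤ j → α j ≤ α i) :
      IsKey n α (∏ i, X i ^ α i)
  | step (α : Fin n → ℕ) (i j : Fin n) (hij : (i : ℕ) + 1 = (j : ℕ)) (h : α i < α j)
      (f : MvPolynomial (Fin n) ℤ) (hf : IsKey n (α ∘ Equiv.swap i j) f) :
      IsKey n α (demazure n i j f)

open Equiv

section RenameSwap

variable {R : Type*} [CommRing R] {n : ℕ}

lemma X_sub_X_dvd_sub_rename_swap (i j : Fin n) (f : MvPolynomial (Fin n) R) :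
    X i - X j ∣ f - rename (swap i j) f := by
  set I := Ideal.span {(X i - X j : MvPolynomial (Fin n) R)}
  have hXij : Ideal.Quotient.mk I (X i) = Ideal.Quotient.mk I (X j) :=
    Ideal.Quotient.eq.2 (Ideal.mem_span_singleton_self _)
  have hmk : (Ideal.Quotient.mkₐ R I).comp (rename (swap i j)) = Ideal.Quotient.mkₐ R I := by
    refine MvPolynomial.algHom_ext fun k => ?_
    rcases eq_or_ne k i with rfl | hki
    · simp [hXij]
    rcases eq_or_ne k j with rfl | hkj
    · simp [hXij]
    · simp [swap_apply_of_ne_of_ne hki hkj]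
  rw [← Ideal.mem_span_singleton, ← Ideal.Quotient.eq]
  exact (DFunLike.congr_fun hmk f).symm

lemma X_sub_X_ne_zero [Nontrivial R] {i j : Fin n} (h : i ≠ j) :
    (X i - X j : MvPolynomial (Fin n) R) ≠ 0 :=
  sub_ne_zero.2 fun hX => h (X_injective hX)

lemma rename_perm_rename_perm (σ τ : Perm (Fin n)) (f : MvPolynomial (Fin n) R) :
    rename σ (rename τ f) = rename (σ * τ : Perm (Fin n)) f :=
  rename_rename _ _ _

lemma rename_swap_rename_swap (i j : Fin n) (f : MvPolynomial (Fin n) R) :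
    rename (swap i j) (rename (swap i j) f) = f := by
  rw [rename_perm_rename_perm, swap_mul_self, Perm.coe_one, rename_id_apply]

end RenameSwap

section Demazure

variable {n : ℕ} {i j k l : Fin n}

lemma X_sub_X_mul_ddiff (i j : Fin n) (f : MvPolynomial (Fin n) ℤ) :
    (X i - X j) * ddiff n i j f = f - rename (swap i j) f := by
  rw [ddiff, dif_pos (X_sub_X_dvd_sub_rename_swap i j f)]
  exact (X_sub_X_dvd_sub_rename_swap i j f).choose_spec.symm

lemma X_sub_X_mul_demazure (i j : Fin n) (f : MvPolynomial (Fin n) ℤ) :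
    (X i - X j) * demazure n i j f = X i * f - X j * rename (swap i j) f := by
  rw [demazure, X_sub_X_mul_ddiff, map_mul, rename_X, swap_apply_left]

lemma demazure_eq_of_X_sub_X_mul (hij : i ≠ j) {f g : MvPolynomial (Fin n) ℤ}
    (h : (X i - X j) * g = X i * f - X j * rename (swap i j) f) : demazure n i j f = g :=
  mul_left_cancel₀ (X_sub_X_ne_zero hij) ((X_sub_X_mul_demazure i j f).trans h.symm)

lemma rename_swap_demazure (hij : i ≠ j) (f : MvPolynomial (Fin n) ℤ) :
    rename (swap i j) (demazure n i j f) = demazure n i j f := by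
  have h := congrArg (rename (swap i j)) (X_sub_X_mul_demazure i j f)
  simp only [map_sub, map_mul, rename_X, swap_apply_left, swap_apply_right,
    rename_swap_rename_swap] at h
  refine mul_left_cancel₀ (X_sub_X_ne_zero hij) ?_
  linear_combination -h - X_sub_X_mul_demazure i j f

lemma demazure_of_rename_swap_eq (hij : i ≠ j) {f : MvPolynomial (Fin n) ℤ}
    (hf : rename (swap i j) f = f) : demazure n i j f = f :=
  demazure_eq_of_X_sub_X_mul hij (by rw [hf]; ring)

lemma demazure_sub (hij : i ≠ j) (f g : MvPolynomial (Fin n) ℤ) :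
    demazure n i j (f - g) = demazure n i j f - demazure n i j g :=
  demazure_eq_of_X_sub_X_mul hij (by
    rw [mul_sub, X_sub_X_mul_demazure, X_sub_X_mul_demazure, map_sub]; ring)

lemma demazure_mul_of_rename_swap_eq (hij : i ≠ j) {h : MvPolynomial (Fin n) ℤ}
    (hh : rename (swap i j) h = h) (f : MvPolynomial (Fin n) ℤ) :
    demazure n i j (h * f) = h * demazure n i j f :=
  demazure_eq_of_X_sub_X_mul hij (by
    rw [mul_left_comm, X_sub_X_mul_demazure, map_mul, hh]; ring)

lemma rename_demazure_of_apply_eq (hij : i ≠ j) {τ : Perm (Fin n)} (hi : τ i = i)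
    (hj : τ j = j) (f : MvPolynomial (Fin n) ℤ) :
    rename τ (demazure n i j f) = demazure n i j (rename τ f) := by
  have hτ : τ * swap i j = swap i j * τ := by
    have h := swap_apply_apply τ i j
    rw [hi, hj] at h
    exact mul_inv_eq_iff_eq_mul.mp h.symm
  refine (demazure_eq_of_X_sub_X_mul hij ?_).symm
  have h := congrArg (rename τ) (X_sub_X_mul_demazure i j f)
  simp only [map_sub, map_mul, rename_X, hi, hj, rename_perm_rename_perm, hτ] at h
  rwa [rename_perm_rename_perm]

lemma rename_swap_X_mul_demazure_sub (hij : i ≠ j) (g : MvPolynomial (Fin n) ℤ) :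
    rename (swap i j) (X i * (demazure n i j g - g)) = X i * (demazure n i j g - g) := by
  rw [map_mul, map_sub, rename_X, swap_apply_left, rename_swap_demazure hij]
  linear_combination -X_sub_X_mul_demazure i j g

lemma demazure_comm (hij : i ≠ j) (hkl : k ≠ l) (hik : i ≠ k) (hil : i ≠ l) (hjk : j ≠ k)
    (hjl : j ≠ l) (f : MvPolynomial (Fin n) ℤ) :
    demazure n i j (demazure n k l f) = demazure n k l (demazure n i j f) := by
  have hX : ∀ m, i ≠ m → j ≠ m → rename (swap i j) (X m : MvPolynomial (Fin n) ℤ) = X m :=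
    fun m hi hj => by rw [rename_X, swap_apply_of_ne_of_ne hi.symm hj.symm]
  refine (demazure_eq_of_X_sub_X_mul hkl ?_).symm
  rw [← demazure_mul_of_rename_swap_eq hij (by rw [map_sub, hX k hik hjk, hX l hil hjl]),
    X_sub_X_mul_demazure, demazure_sub hij, demazure_mul_of_rename_swap_eq hij (hX k hik hjk),
    demazure_mul_of_rename_swap_eq hij (hX l hil hjl),
    rename_demazure_of_apply_eq hij (swap_apply_of_ne_of_ne hik hil)
      (swap_apply_of_ne_of_ne hjk hjl)]

lemma demazure_braid (hij : i ≠ j) (hik : i ≠ k) (hjk : j ≠ k) (f : MvPolynomial (Fin n) ℤ) :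
    demazure n i j (demazure n j k (demazure n i j f)) =
      demazure n j k (demazure n i j (demazure n j k f)) := by
  -- Both sides times the Vandermonde product equal the alternating sum of `σ (x_i² x_j f)`
  -- over the permutations `σ` of `{i, j, k}`.
  have hV : ((X i - X j) * (X i - X k) * (X j - X k) : MvPolynomial (Fin n) ℤ) ≠ 0 :=
    mul_ne_zero (mul_ne_zero (X_sub_X_ne_zero hij) (X_sub_X_ne_zero hik)) (X_sub_X_ne_zero hjk)
  have hperm : swap i j * (swap j k * swap i j) = swap j k * (swap i j * swap j k) := by
    rw [← mul_assoc, ← mul_assoc, swap_mul_swap_mul_swap hij hik, swap_comm i j, swap_comm j k,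
      swap_mul_swap_mul_swap hjk.symm hik.symm, swap_comm]
  set a := demazure n i j f
  set b := demazure n j k a
  set c := demazure n j k f
  set d := demazure n i j c
  have ha := X_sub_X_mul_demazure i j f
  have hb := X_sub_X_mul_demazure j k a
  have hc := X_sub_X_mul_demazure j k f
  have hd := X_sub_X_mul_demazure i j c
  have hsa : rename (swap i j) a = a := rename_swap_demazure hij f
  have hsc : rename (swap j k) c = c := rename_swap_demazure hjk f
  have hb' := congrArg (rename (swap i j)) hb
  have ha' := congrArg (rename (swap j k)) ha
  have ha'' := congrArg (rename (swap i j)) ha'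
  have hd' := congrArg (rename (swap j k)) hd
  have hc' := congrArg (rename (swap i j)) hc
  have hc'' := congrArg (rename (swap j k)) hc'
  simp only [map_sub, map_mul, rename_X, swap_apply_left, swap_apply_right, hsa, hsc,
    swap_apply_of_ne_of_ne hij hik, swap_apply_of_ne_of_ne hik.symm hjk.symm,
    rename_perm_rename_perm, hperm] at hb' ha' ha'' hd' hc' hc''
  apply mul_left_cancel₀ hV
  linear_combination ((X i - X k) * (X j - X k)) * X_sub_X_mul_demazure i j b
    + (X i * (X i - X k)) * hb - (X j * (X j - X k)) * hb' + (X i * X j) * ha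
    - (X i * X k) * ha' + (X j * X k) * ha''
    - ((X i - X j) * (X i - X k)) * X_sub_X_mul_demazure j k d - (X j * (X i - X k)) * hd
    + (X k * (X i - X j)) * hd' - (X i ^ 2) * hc + (X j ^ 2) * hc' - (X k ^ 2) * hc''

end Demazure

section KeyPolynomial

variable {n : ℕ} {a b c d : Fin n}

def positionWeight (β : Fin n → ℕ) : ℕ :=
  ∑ x : Fin n, (x : ℕ) * β x

lemma positionWeight_comp_swap_lt {β : Fin n → ℕ} (hab : (a : ℕ) + 1 = b) (h : β a < β b) :
    positionWeight (β ∘ swap a b) < positionWeight β := by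
  have hne : a ≠ b := Fin.ne_of_val_ne (by omega)
  have key : (positionWeight (β ∘ swap a b) : ℤ) - positionWeight β = β a - β b := by
    rw [positionWeight, ← Equiv.sum_comp (swap a b)]
    push_cast [positionWeight, Function.comp_apply, swap_apply_self]
    rw [← Finset.sum_sub_distrib, Fintype.sum_eq_add a b hne]
    · simp only [swap_apply_left, swap_apply_right, ← hab]
      push_cast
      ring
    · rintro x ⟨hxa, hxb⟩
      simp [swap_apply_of_ne_of_ne hxa hxb]
  omega

lemma Fin.antitone_of_forall_succ_le {β : Fin n → ℕ}
    (h : ∀ i j : Fin n, (i : ℕ) + 1 = j → β j ≤ β i) : Antitone β := by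
  cases n with
  | zero => exact fun a => a.elim0
  | succ m => exact Fin.antitone_iff_succ_le.2 fun k => h _ _ (by simp)

theorem IsKey.exists (β : Fin n → ℕ) : ∃ f, IsKey n β f := by
  by_cases h : ∃ i j : Fin n, (i : ℕ) + 1 = j ∧ β i < β j
  · obtain ⟨i, j, hij, hlt⟩ := h
    obtain ⟨g, hg⟩ := IsKey.exists (β ∘ swap i j)
    exact ⟨_, .step β i j hij hlt g hg⟩
  · simp only [not_exists, not_and, not_lt] at h
    exact ⟨_, .decreasing β (Fin.antitone_of_forall_succ_le h)⟩
termination_by positionWeight β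
decreasing_by exact positionWeight_comp_swap_lt hij hlt

variable {β : Fin n → ℕ}

lemma demazure_eq_of_disjoint_ascents (hab : (a : ℕ) + 1 = b) (hcd : (c : ℕ) + 1 = d)
    (hbc : (b : ℕ) < c) (h₁ : β a < β b) (h₂ : β c < β d)
    (hu₁ : ∀ f g, IsKey n (β ∘ swap a b) f → IsKey n (β ∘ swap a b) g → f = g)
    (hu₂ : ∀ f g, IsKey n (β ∘ swap c d) f → IsKey n (β ∘ swap c d) g → f = g)
    {g₁ g₂ : MvPolynomial (Fin n) ℤ} (hg₁ : IsKey n (β ∘ swap a b) g₁)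
    (hg₂ : IsKey n (β ∘ swap c d) g₂) : demazure n a b g₁ = demazure n c d g₂ := by
  have hab' : a ≠ b := Fin.ne_of_val_ne (by omega)
  have hcd' : c ≠ d := Fin.ne_of_val_ne (by omega)
  have hac : a ≠ c := Fin.ne_of_val_ne (by omega)
  have had : a ≠ d := Fin.ne_of_val_ne (by omega)
  have hbc' : b ≠ c := Fin.ne_of_val_ne (by omega)
  have hbd : b ≠ d := Fin.ne_of_val_ne (by omega)
  have hcomm : swap c d * swap a b = swap a b * swap c d :=
    (Perm.disjoint_swap_swap (by simp [*, hac.symm, had.symm, hbc'.symm, hbd.symm])).commute.eq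
  obtain ⟨w, hw⟩ := IsKey.exists (β ∘ ⇑(swap a b * swap c d))
  have hw' : IsKey n (β ∘ ⇑(swap c d * swap a b)) w := hcomm ▸ hw
  rw [hu₁ _ _ hg₁ (.step _ c d hcd (by simp [swap_apply_of_ne_of_ne, *, hac.symm, had.symm,
      hbc'.symm, hbd.symm]) w hw),
    hu₂ _ _ hg₂ (.step _ a b hab (by simp [swap_apply_of_ne_of_ne, *]) w hw')]
  exact demazure_comm hab' hcd' hac had hbc' hbd w

lemma demazure_eq_of_consecutive_ascents (hab : (a : ℕ) + 1 = b) (hbc : (b : ℕ) + 1 = c)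
    (h₁ : β a < β b) (h₂ : β b < β c)
    (hu₁ : ∀ f g, IsKey n (β ∘ swap a b) f → IsKey n (β ∘ swap a b) g → f = g)
    (hu₂ : ∀ f g, IsKey n (β ∘ swap b c) f → IsKey n (β ∘ swap b c) g → f = g)
    {g₁ g₂ : MvPolynomial (Fin n) ℤ} (hg₁ : IsKey n (β ∘ swap a b) g₁)
    (hg₂ : IsKey n (β ∘ swap b c) g₂) : demazure n a b g₁ = demazure n b c g₂ := by
  have hab' : a ≠ b := Fin.ne_of_val_ne (by omega)
  have hac : a ≠ c := Fin.ne_of_val_ne (by omega)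
  have hbc' : b ≠ c := Fin.ne_of_val_ne (by omega)
  have hperm : swap a b * swap b c * swap a b = swap b c * swap a b * swap b c := by
    rw [swap_mul_swap_mul_swap hab' hac, swap_comm a b, swap_comm b c,
      swap_mul_swap_mul_swap hbc'.symm hac.symm, swap_comm]
  obtain ⟨w, hw⟩ := IsKey.exists (β ∘ ⇑(swap a b * swap b c * swap a b))
  have hw' : IsKey n (β ∘ ⇑(swap b c * swap a b * swap b c)) w := hperm ▸ hw
  have hk₁ : IsKey n (β ∘ swap a b) (demazure n b c (demazure n a b w)) :=
    .step _ b c hbc (by simp [swap_apply_of_ne_of_ne, *, hac.symm, hbc'.symm]; omega)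
      _ (.step _ a b hab (by simp [swap_apply_of_ne_of_ne, *, hac.symm, hbc'.symm]) w hw)
  have hk₂ : IsKey n (β ∘ swap b c) (demazure n a b (demazure n b c w)) :=
    .step _ a b hab (by simp [swap_apply_of_ne_of_ne, *]; omega)
      _ (.step _ b c hbc (by simp [swap_apply_of_ne_of_ne, *, hac.symm, hbc'.symm]) w hw')
  rw [hu₁ _ _ hg₁ hk₁, hu₂ _ _ hg₂ hk₂]
  exact demazure_braid hab' hac hbc' w

lemma demazure_eq_of_ascents (hab : (a : ℕ) + 1 = b) (hcd : (c : ℕ) + 1 = d)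
    (hac : (a : ℕ) < c) (h₁ : β a < β b) (h₂ : β c < β d)
    (hu₁ : ∀ f g, IsKey n (β ∘ swap a b) f → IsKey n (β ∘ swap a b) g → f = g)
    (hu₂ : ∀ f g, IsKey n (β ∘ swap c d) f → IsKey n (β ∘ swap c d) g → f = g)
    {g₁ g₂ : MvPolynomial (Fin n) ℤ} (hg₁ : IsKey n (β ∘ swap a b) g₁)
    (hg₂ : IsKey n (β ∘ swap c d) g₂) : demazure n a b g₁ = demazure n c d g₂ := by
  rcases (show (b : ℕ) ≤ c by omega).eq_or_lt with hbc | hbc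
  · obtain rfl : b = c := Fin.ext hbc
    exact demazure_eq_of_consecutive_ascents hab hcd h₁ h₂ hu₁ hu₂ hg₁ hg₂
  · exact demazure_eq_of_disjoint_ascents hab hcd hbc h₁ h₂ hu₁ hu₂ hg₁ hg₂

theorem IsKey.unique {β : Fin n → ℕ} {f g : MvPolynomial (Fin n) ℤ} (hf : IsKey n β f)
    (hg : IsKey n β g) : f = g := by
  cases hf with
  | decreasing _ hβ =>
    cases hg with
    | decreasing => rfl
    | step _ i j hij hlt => exact absurd (hβ i j (Fin.le_def.2 (by omega))) (not_le.2 hlt)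
  | step _ i j hij hlt f₁ hf₁ =>
    cases hg with
    | decreasing _ hβ => exact absurd (hβ i j (Fin.le_def.2 (by omega))) (not_le.2 hlt)
    | step _ k l hkl hlt' g₁ hg₁ =>
      rcases lt_trichotomy (i : ℕ) k with hik | hik | hik
      · exact demazure_eq_of_ascents hij hkl hik hlt hlt' (fun _ _ => IsKey.unique)
          (fun _ _ => IsKey.unique) hf₁ hg₁
      · obtain rfl : i = k := Fin.ext hik
        obtain rfl : j = l := Fin.ext (by omega)
        rw [hf₁.unique hg₁]
      · exact (demazure_eq_of_ascents hkl hij hik hlt' hlt (fun _ _ => IsKey.unique)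
          (fun _ _ => IsKey.unique) hg₁ hf₁).symm
termination_by positionWeight β
decreasing_by
  all_goals first
    | exact positionWeight_comp_swap_lt hij hlt
    | exact positionWeight_comp_swap_lt hkl hlt'

lemma rename_swap_prod_X_pow {R : Type*} [CommSemiring R] {k l : Fin n} (h : β k = β l) :
    rename (swap k l) (∏ i, X i ^ β i : MvPolynomial (Fin n) R) = ∏ i, X i ^ β i := by
  have hβ : ∀ i, β (swap k l i) = β i := fun i => by
    rcases eq_or_ne i k with rfl | hik
    · rw [swap_apply_left, h]
    rcases eq_or_ne i l with rfl | hil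
    · rw [swap_apply_right, h]
    · rw [swap_apply_of_ne_of_ne hik hil]
  simp only [map_prod, map_pow, rename_X]
  rw [← Equiv.prod_comp (swap k l)]
  simp only [swap_apply_self, hβ]

lemma rename_swap_demazure_demazure (hab : a ≠ b) (hac : a ≠ c) (hbc : b ≠ c)
    {w : MvPolynomial (Fin n) ℤ} (hw : rename (swap b c) w = w) :
    rename (swap a b) (demazure n b c (demazure n a b w)) =
      demazure n b c (demazure n a b w) := by
  have h : demazure n b c (demazure n a b w) =
      demazure n a b (demazure n b c (demazure n a b w)) := by
    conv_lhs => rw [← demazure_of_rename_swap_eq hbc hw]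
    exact (demazure_braid hab hac hbc w).symm
  rw [h]
  exact rename_swap_demazure hab _

lemma rename_swap_demazure_demazure' (hab : a ≠ b) (hac : a ≠ c) (hbc : b ≠ c)
    {w : MvPolynomial (Fin n) ℤ} (hw : rename (swap a b) w = w) :
    rename (swap b c) (demazure n a b (demazure n b c w)) =
      demazure n a b (demazure n b c w) := by
  have h : demazure n a b (demazure n b c w) =
      demazure n b c (demazure n a b (demazure n b c w)) := by
    conv_lhs => rw [← demazure_of_rename_swap_eq hab hw]
    exact demazure_braid hab hac hbc w
  rw [h]
  exact rename_swap_demazure hbc _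

theorem IsKey.rename_swap_eq_of_lt {f : MvPolynomial (Fin n) ℤ} (hf : IsKey n β f)
    (hab : (a : ℕ) + 1 = b) (hlt : β a < β b) : rename (swap a b) f = f := by
  obtain ⟨w, hw⟩ := IsKey.exists (β ∘ swap a b)
  rw [hf.unique (.step β a b hab hlt w hw)]
  exact rename_swap_demazure (Fin.ne_of_val_ne (by omega)) w

theorem IsKey.rename_swap_eq_of_eq {β : Fin n → ℕ} {f : MvPolynomial (Fin n) ℤ}
    (hf : IsKey n β f) {k l : Fin n} (hkl : (k : ℕ) + 1 = l) (heq : β k = β l) :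
    rename (swap k l) f = f := by
  have hkl' : k ≠ l := Fin.ne_of_val_ne (by omega)
  cases hf with
  | decreasing => exact rename_swap_prod_X_pow heq
  | step _ i j hij hlt f₁ hf₁ =>
    have hij' : i ≠ j := Fin.ne_of_val_ne (by omega)
    by_cases hli : l = i
    · subst hli
      have hkj : k ≠ j := Fin.ne_of_val_ne (by omega)
      have hasc : (β ∘ swap l j) k < (β ∘ swap l j) l := by
        simp [swap_apply_of_ne_of_ne hkl' hkj, heq, hlt]
      obtain ⟨w, hw⟩ := IsKey.exists ((β ∘ swap l j) ∘ swap k l)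
      rw [hf₁.unique (.step _ k l hkl hasc w hw)]
      exact rename_swap_demazure_demazure hkl' hkj hij' (hw.rename_swap_eq_of_eq hij
        (by simp [swap_apply_of_ne_of_ne hkl' hkj, swap_apply_of_ne_of_ne hkj.symm hij'.symm, heq]))
    by_cases hkj : k = j
    · subst hkj
      have hil : i ≠ l := Fin.ne_of_val_ne (by omega)
      have hasc : (β ∘ swap i k) k < (β ∘ swap i k) l := by
        simp [swap_apply_of_ne_of_ne hil.symm hkl'.symm, ← heq, hlt]
      obtain ⟨w, hw⟩ := IsKey.exists ((β ∘ swap i k) ∘ swap k l)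
      rw [hf₁.unique (.step _ k l hkl hasc w hw)]
      exact rename_swap_demazure_demazure' hij' hil hkl' (hw.rename_swap_eq_of_eq hij
        (by simp [swap_apply_of_ne_of_ne hij' hil, swap_apply_of_ne_of_ne hil.symm hkl'.symm, heq]))
    have hik : i ≠ k := fun h => by
      subst h
      obtain rfl : j = l := Fin.ext (by omega)
      omega
    have hjl : j ≠ l := fun h => hik (Fin.ext (by subst h; omega))
    rw [rename_demazure_of_apply_eq hij' (swap_apply_of_ne_of_ne hik (Ne.symm hli))
        (swap_apply_of_ne_of_ne (Ne.symm hkj) hjl),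
      hf₁.rename_swap_eq_of_eq hkl (by simp [swap_apply_of_ne_of_ne, hik.symm, hjl.symm, hli,
        hkj, heq])]
termination_by positionWeight β
decreasing_by
  all_goals first
    | exact positionWeight_comp_swap_lt hij hlt
    | exact (positionWeight_comp_swap_lt hkl hasc).trans (positionWeight_comp_swap_lt hij hlt)

theorem IsKey.rename_swap_eq {f : MvPolynomial (Fin n) ℤ} (hf : IsKey n β f)
    (hab : (a : ℕ) + 1 = b) (hle : β a ≤ β b) : rename (swap a b) f = f :=
  hle.lt_or_eq.elim (hf.rename_swap_eq_of_lt hab) (hf.rename_swap_eq_of_eq hab)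

end KeyPolynomial

section Antisymmetrization

variable {n t : ℕ} (ht : t ≤ n)

def castLEPerm : Perm (Fin t) →* Perm (Fin n) :=
  Perm.extendDomainHom (Fin.castLEquiv ht)

lemma castLEPerm_apply_castLE (σ : Perm (Fin t)) (a : Fin t) :
    castLEPerm ht σ (Fin.castLE ht a) = Fin.castLE ht (σ a) :=
  Perm.extendDomain_apply_image σ (Fin.castLEquiv ht) a

lemma castLEPerm_apply_of_le (σ : Perm (Fin t)) {x : Fin n} (hx : t ≤ x) :
    castLEPerm ht σ x = x :=
  Perm.extendDomain_apply_not_subtype σ (Fin.castLEquiv ht) (not_lt.2 hx)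

lemma castLEPerm_swap (a b : Fin t) :
    castLEPerm ht (swap a b) = swap (Fin.castLE ht a) (Fin.castLE ht b) := by
  ext x
  by_cases hx : (x : ℕ) < t
  · obtain ⟨y, rfl⟩ : ∃ y : Fin t, Fin.castLE ht y = x := ⟨⟨x, hx⟩, rfl⟩
    rw [castLEPerm_apply_castLE, (Fin.castLE_injective ht).swap_apply]
  · have hxt : t ≤ x := not_lt.1 hx
    rw [castLEPerm_apply_of_le ht _ hxt, swap_apply_of_ne_of_ne]
    · exact Fin.ne_of_val_ne (by simp; omega)
    · exact Fin.ne_of_val_ne (by simp; omega)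

noncomputable def antisymmetrize (g : MvPolynomial (Fin n) ℤ) : MvPolynomial (Fin n) ℤ :=
  ∑ σ : Perm (Fin t), Perm.sign σ • rename (castLEPerm ht σ) g

lemma antisymmetrize_sub (g h : MvPolynomial (Fin n) ℤ) :
    antisymmetrize ht (g - h) = antisymmetrize ht g - antisymmetrize ht h := by
  simp only [antisymmetrize, map_sub, smul_sub, Finset.sum_sub_distrib]

lemma antisymmetrize_rename (τ : Perm (Fin t)) (g : MvPolynomial (Fin n) ℤ) :
    antisymmetrize ht (rename (castLEPerm ht τ) g) = Perm.sign τ • antisymmetrize ht g := by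
  rw [antisymmetrize, antisymmetrize, Finset.smul_sum,
    ← Equiv.sum_comp (Equiv.mulRight τ)
      (fun σ => Perm.sign τ • Perm.sign σ • rename (castLEPerm ht σ) g)]
  refine Finset.sum_congr rfl fun σ _ => ?_
  rw [rename_perm_rename_perm, ← map_mul, smul_smul, coe_mulRight, Perm.sign_mul,
    mul_left_comm, Int.units_mul_self, mul_one]

lemma antisymmetrize_eq_zero_of_rename_swap_eq {a b : Fin t} (hab : a ≠ b)
    {g : MvPolynomial (Fin n) ℤ}
    (hg : rename (swap (Fin.castLE ht a) (Fin.castLE ht b)) g = g) :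
    antisymmetrize ht g = 0 := by
  have h := antisymmetrize_rename ht (swap a b) g
  rw [castLEPerm_swap, hg, Perm.sign_swap hab, Units.neg_smul, one_smul] at h
  exact self_eq_neg.1 h

lemma antisymmetrize_mul_of_forall_rename_eq {f : MvPolynomial (Fin n) ℤ}
    (hf : ∀ σ, rename (castLEPerm ht σ) f = f) (g : MvPolynomial (Fin n) ℤ) :
    antisymmetrize ht (g * f) = antisymmetrize ht g * f := by
  simp only [antisymmetrize, Finset.sum_mul, map_mul, hf, smul_mul_assoc]

lemma antisymmetrize_prod_X_pow (e : Fin t → ℕ) :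
    antisymmetrize ht (∏ j, X (Fin.castLE ht j) ^ e j) =
      Matrix.det (Matrix.of fun i j : Fin t =>
        (X (Fin.castLE ht i) : MvPolynomial (Fin n) ℤ) ^ e j) := by
  simp only [antisymmetrize, Matrix.det_apply, Matrix.of_apply, map_prod, map_pow, rename_X,
    castLEPerm_apply_castLE]

end Antisymmetrization

section Bialternant

variable {n t : ℕ} (ht : t ≤ n)

noncomputable def deltaMonomial : MvPolynomial (Fin n) ℤ :=
  ∏ j : Fin t, X (Fin.castLE ht j) ^ (t - 1 - (j : ℕ))

lemma antisymmetrize_deltaMonomial_mul_demazure {i j : Fin t} (hij : (i : ℕ) + 1 = j)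
    (g : MvPolynomial (Fin n) ℤ) :
    antisymmetrize ht (deltaMonomial ht * demazure n (Fin.castLE ht i) (Fin.castLE ht j) g) =
      antisymmetrize ht (deltaMonomial ht * g) := by
  have hij' : i ≠ j := Fin.ne_of_val_ne (by omega)
  set x := Fin.castLE ht i
  set y := Fin.castLE ht j
  have hxy : x ≠ y := (Fin.castLE_injective ht).ne hij'
  have hj : j ∈ Finset.univ.erase i := Finset.mem_erase.2 ⟨hij'.symm, Finset.mem_univ j⟩
  set m : MvPolynomial (Fin n) ℤ :=
    ∏ k ∈ (Finset.univ.erase i).erase j, X (Fin.castLE ht k) ^ (t - 1 - (k : ℕ))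
  have hm : rename (swap x y) m = m := by
    simp only [m, map_prod, map_pow, rename_X]
    refine Finset.prod_congr rfl fun k hk => ?_
    obtain ⟨hkj, hki⟩ : k ≠ j ∧ k ≠ i := by simpa using hk
    rw [swap_apply_of_ne_of_ne ((Fin.castLE_injective ht).ne hki)
      ((Fin.castLE_injective ht).ne hkj)]
  have hδ : deltaMonomial ht = (X x * X y) ^ (t - 1 - (j : ℕ)) * m * X x := by
    rw [deltaMonomial, ← Finset.mul_prod_erase _ _ (Finset.mem_univ i),
      ← Finset.mul_prod_erase _ _ hj, show t - 1 - (i : ℕ) = t - 1 - (j : ℕ) + 1 by omega]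
    ring
  have hsym : rename (swap x y) (deltaMonomial ht * (demazure n x y g - g)) =
      deltaMonomial ht * (demazure n x y g - g) := by
    rw [hδ, mul_assoc _ (X x), map_mul, map_mul, map_pow, map_mul, rename_X, rename_X,
      swap_apply_left, swap_apply_right, hm, rename_swap_X_mul_demazure_sub hxy, mul_comm (X y)]
  rw [← sub_eq_zero, ← antisymmetrize_sub, ← mul_sub]
  exact antisymmetrize_eq_zero_of_rename_swap_eq ht hij' hsym

lemma prod_X_pow_eq_prod_castLE {R : Type*} [CommSemiring R] {β : Fin n → ℕ}
    (hβ : ∀ x : Fin n, t ≤ x → β x = 0) :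
    (∏ x, X x ^ β x : MvPolynomial (Fin n) R) =
      ∏ j : Fin t, X (Fin.castLE ht j) ^ β (Fin.castLE ht j) := by
  refine ((Finset.prod_subset (Finset.subset_univ (Finset.univ.map (Fin.castLEEmb ht)))
    fun x _ hx => ?_).symm).trans (Finset.prod_map _ _ _)
  have hxt : t ≤ x := not_lt.1 fun h => hx (Finset.mem_map.2 ⟨⟨x, h⟩, Finset.mem_univ _, rfl⟩)
  rw [hβ x hxt, pow_zero]

lemma rename_castLEPerm_eq_of_forall_swap {f : MvPolynomial (Fin n) ℤ}
    (hf : ∀ a b : Fin t, (a : ℕ) + 1 = b →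
      rename (swap (Fin.castLE ht a) (Fin.castLE ht b)) f = f)
    (σ : Perm (Fin t)) : rename (castLEPerm ht σ) f = f := by
  let S : Submonoid (Perm (Fin t)) :=
    { carrier := {σ | rename (castLEPerm ht σ) f = f}
      one_mem' := by simp
      mul_mem' := fun {σ τ} (hσ : rename _ f = f) (hτ : rename _ f = f) =>
        show rename _ f = f by rw [map_mul, ← rename_perm_rename_perm, hτ, hσ] }
  suffices σ ∈ S from this
  cases t with
  | zero => exact Subsingleton.elim 1 σ ▸ S.one_mem
  | succ t =>
    refine Submonoid.closure_le.2 ?_ (Perm.mclosure_swap_castSucc_succ t ▸ Submonoid.mem_top σ)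
    rintro _ ⟨a, rfl⟩
    show rename _ f = f
    rw [castLEPerm_swap]
    exact hf _ _ (by simp)

lemma antisymmetrize_deltaMonomial_mul_of_isKey {α : Fin n → ℕ}
    (hzero : ∀ x : Fin n, t ≤ x → α x = 0) (hα : Monotone (α ∘ Fin.castLE ht))
    {β : Fin n → ℕ} {g : MvPolynomial (Fin n) ℤ} (hg : IsKey n β g) {σ : Perm (Fin t)}
    (hβ : β = α ∘ castLEPerm ht σ) :
    antisymmetrize ht (deltaMonomial ht * g) =
      Matrix.det (Matrix.of fun i j : Fin t =>
        (X (Fin.castLE ht i) : MvPolynomial (Fin n) ℤ) ^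
          (α (Fin.castLE ht j.rev) + (t - 1 - (j : ℕ)))) := by
  induction hg generalizing σ with
  | decreasing β hdec =>
    subst hβ
    have hrestrict : (α ∘ castLEPerm ht σ) ∘ Fin.castLE ht = (α ∘ Fin.castLE ht) ∘ σ := by
      ext a; simp [castLEPerm_apply_castLE]
    have hsort : (α ∘ Fin.castLE ht) ∘ σ = (α ∘ Fin.castLE ht) ∘ Fin.revPerm :=
      Tuple.unique_antitone
        (hrestrict ▸ Antitone.comp_monotone hdec (Fin.strictMono_castLE ht).monotone)
        (hα.comp_antitone Fin.rev_anti)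
    rw [prod_X_pow_eq_prod_castLE ht fun x hx => by
        simp [castLEPerm_apply_of_le ht σ hx, hzero x hx],
      deltaMonomial, ← Finset.prod_mul_distrib, ← antisymmetrize_prod_X_pow]
    congr 2; funext j
    have hj := congrFun (hrestrict.trans hsort) j
    simp only [Function.comp_apply, Fin.revPerm_apply] at hj
    rw [← pow_add, add_comm, Function.comp_apply, hj]
  | step β i j hij hlt g₁ hg₁ ih =>
    subst hβ
    have hjt : (j : ℕ) < t := by
      by_contra! hj
      simp [castLEPerm_apply_of_le ht σ hj, hzero j hj] at hlt
    obtain ⟨i', rfl⟩ : ∃ i' : Fin t, Fin.castLE ht i' = i := ⟨⟨i, by omega⟩, rfl⟩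
    obtain ⟨j', rfl⟩ : ∃ j' : Fin t, Fin.castLE ht j' = j := ⟨⟨j, hjt⟩, rfl⟩
    rw [antisymmetrize_deltaMonomial_mul_demazure ht hij]
    exact ih (σ := σ * swap i' j') (by rw [map_mul, castLEPerm_swap]; rfl)

end Bialternant

/-- if α = (α_1,...,α_t,0,0,...) with α_1 ≤ ... ≤ α_t, then
κ_α = s_{(α_t,...,α_1)}(x_1,...,x_t).  The Schur polynomial is expressed via the
bialternant formula: (Vandermonde determinant) · κ_α = det(x_i^{λ_j + t - j}), where
λ = (α_t,...,α_1). -/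
theorem key_eq_schur (n t : ℕ) (ht : t ≤ n) (α : Fin n → ℕ)
    (hzero : ∀ j : Fin n, t ≤ (j : ℕ) → α j = 0)
    (hmono : ∀ i j : Fin n, i ≤ j → (j : ℕ) < t → α i ≤ α j)
    (f : MvPolynomial (Fin n) ℤ) (hf : IsKey n α f) :
    Matrix.det (Matrix.of fun i j : Fin t =>
        (X (Fin.castLE ht i) : MvPolynomial (Fin n) ℤ) ^ (t - 1 - (j : ℕ))) * f =
    Matrix.det (Matrix.of fun i j : Fin t =>
        (X (Fin.castLE ht i) : MvPolynomial (Fin n) ℤ) ^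
          (α (Fin.castLE ht j.rev) + (t - 1 - (j : ℕ)))) := by
  have hα : Monotone (α ∘ Fin.castLE ht) := fun a b hab =>
    hmono _ _ ((Fin.castLE_le_castLE_iff ht).2 hab) b.isLt
  have hsym : ∀ σ, rename (castLEPerm ht σ) f = f :=
    rename_castLEPerm_eq_of_forall_swap ht fun a b hab => hf.rename_swap_eq hab (hα (by
      rw [Fin.le_def]; omega))
  rw [← antisymmetrize_deltaMonomial_mul_of_isKey ht hzero hα hf (σ := 1) (by simp),
    mul_comm, antisymmetrize_mul_of_forall_rename_eq ht hsym, deltaMonomial,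
    antisymmetrize_prod_X_pow, mul_comm]
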